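/- arXiv:2008.11865 — 2 statements merged into one kernel-verified Lean document; each statement's English description precedes it below -/
import Mathlib

section
/- Under the symmetric-probabilities assumption, the averaged softmax Hessian Ū = Ave_c U_c (where U_c = diag(p_{·,c}) − p_{·,c} p_{·,c}ᵀ and p_{·,c} has entry 1−α at coordinate c and α/(C−1) elsewhere) has eigenvalue 0 with multiplicity 1 and eigenvalue (α/(C−1))(2 − αC/(C−1)) with multiplicity C−1. -/
open Matrix Polynomial

/-- Under the symmetric-probabilities assumption, `Ū = Ave_c U_c` has eigenvalue `0`
with multiplicity 1 and eigenvalue `(α/(C−1))(2 − αC/(C−1))` with multiplicity `C−1`. -/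
theorem stmt12 (C : ℕ) (hC : 2 ≤ C) (α : ℝ) (hα0 : 0 < α) (hα1 : α < 1)
    (p : Fin C → Fin C → ℝ)
    (hp : ∀ c c', p c c' = if c' = c then 1 - α else α / (C - 1))
    (U : Fin C → Matrix (Fin C) (Fin C) ℝ)
    (hU : ∀ c, U c = Matrix.diagonal (p c) - vecMulVec (p c) (p c))
    (Ubar : Matrix (Fin C) (Fin C) ℝ)
    (hUbar : Ubar = (C : ℝ)⁻¹ • ∑ c, U c) :
    Ubar.charpoly =
      X * (X - Polynomial.C (α / (C - 1) * (2 - α * C / (C - 1)))) ^ (C - 1) := by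
  have hC1 : ((C : ℝ) - 1) ≠ 0 := by
    have : (2 : ℝ) ≤ (C : ℝ) := by exact_mod_cast hC
    nlinarith
  have hCne : (C : ℝ) ≠ 0 := by
    have : (2 : ℝ) ≤ (C : ℝ) := by exact_mod_cast hC
    nlinarith
  set β : ℝ := α / ((C : ℝ) - 1) with hβ
  set lam : ℝ := β * (2 - α * (C : ℝ) / ((C : ℝ) - 1)) with hlam
  -- sum of probabilities is 1
  have hsum1 : ∀ i : Fin C, ∑ c, p c i = 1 := by
    intro i
    have h1 : ∀ c : Fin C, p c i = β + (if i = c then 1 - α - β else 0) := by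
      intro c; rw [hp]; split_ifs <;> ring
    rw [Finset.sum_congr rfl fun c _ => h1 c, Finset.sum_add_distrib, Finset.sum_const,
      Finset.sum_ite_eq, Finset.card_univ, Fintype.card_fin]
    simp only [Finset.mem_univ, if_true, nsmul_eq_mul]
    rw [hβ]; field_simp; ring
  -- entries of Ubar
  have hE : ∀ i j, Ubar i j = if i = j then lam - lam / C else -(lam / C) := by
    intro i j
    have h2 : ∀ c : Fin C, p c i * p c j =
        β ^ 2 + (if i = c then (1 - α - β) * β else 0)
          + (if j = c then (1 - α - β) * β else 0)
          + (if i = c then (if j = c then (1 - α - β) ^ 2 else 0) else 0) := by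
      intro c; rw [hp, hp]; split_ifs <;> ring
    have hsum2 : ∑ c, p c i * p c j =
        (C : ℝ) * β ^ 2 + (1 - α - β) * β + (1 - α - β) * β
          + (if j = i then (1 - α - β) ^ 2 else 0) := by
      rw [Finset.sum_congr rfl fun c _ => h2 c]
      rw [Finset.sum_add_distrib, Finset.sum_add_distrib, Finset.sum_add_distrib,
        Finset.sum_const, Finset.sum_ite_eq, Finset.sum_ite_eq, Finset.sum_ite_eq,
        Finset.card_univ, Fintype.card_fin]
      simp [mul_comm]
    have h3 : ∑ c, (if i = j then p c i else 0) = if i = j then 1 else 0 := by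
      by_cases h : i = j <;> simp [h, hsum1]
    rw [hUbar]
    simp only [Matrix.smul_apply, Matrix.sum_apply, hU, Matrix.sub_apply,
      Matrix.diagonal_apply, Matrix.vecMulVec_apply, smul_eq_mul]
    rw [Finset.sum_sub_distrib, hsum2, h3]
    by_cases h : i = j
    · simp only [h, if_true, eq_comm]
      rw [hlam, hβ]; field_simp; ring
    · simp only [h, if_false]
      rw [if_neg (fun hh => h hh.symm)]
      rw [hlam, hβ]; field_simp; ring
  -- prove the polynomial identity by evaluating at all x ≠ lam
  apply Polynomial.eq_of_infinite_eval_eq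
  have hsub : ({lam}ᶜ : Set ℝ) ⊆
      {x | eval x Ubar.charpoly
        = eval x (X * (X - Polynomial.C lam) ^ (C - 1))} := by
    intro x hx
    have hxl : x - lam ≠ 0 := by
      intro h
      exact hx (by simp [Set.mem_singleton_iff, sub_eq_zero.mp h])
    have hev : eval x Ubar.charpoly = ((charmatrix Ubar).map (eval x)).det := by
      rw [Matrix.charpoly, ← Polynomial.coe_evalRingHom, RingHom.map_det]
      rfl
    have hmat : (charmatrix Ubar).map (eval x)
        = (x - lam) • (1 + Matrix.replicateCol Unit (fun _ => (1 : ℝ))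
            * Matrix.replicateRow Unit (fun _ => (lam / C) / (x - lam))) := by
      ext i j
      rw [Matrix.map_apply]
      by_cases h : i = j
      · subst h
        rw [charmatrix_apply_eq]
        simp [Matrix.mul_apply, Matrix.one_apply, hE]
        field_simp
        ring
      · rw [charmatrix_apply_ne _ _ _ h]
        simp [Matrix.mul_apply, Matrix.one_apply, h, hE]
        field_simp
    rw [Set.mem_setOf_eq, hev, hmat, Matrix.det_smul,
      Matrix.det_one_add_replicateCol_mul_replicateRow]
    simp only [dotProduct, Finset.sum_const, Finset.card_univ, Fintype.card_fin,
      nsmul_eq_mul, mul_one, Fintype.card_fin, eval_mul, eval_X, eval_pow,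
      eval_sub, eval_C]
    have hpowC : (x - lam) ^ C = (x - lam) ^ (C - 1) * (x - lam) := by
      rw [← pow_succ]; congr 1; omega
    rw [hpowC]
    field_simp
    ring
  exact Set.Infinite.mono hsub ((Set.finite_singleton lam).infinite_compl)
end

section
/- The matrix (s/C)U_1 + Ū (with U_c and Ū as in the symmetric probabilities setting) has eigenvalues: T = (α/(C−1))(s(1−α) + (2 − αC/(C−1))) with multiplicity 1, (α/(C−1))(s/C + (2 − αC/(C−1))) with multiplicity C−2, and 0 with multiplicity 1. -/
/-!
With `β = α/(C-1)` and `γ = 1 - Cβ`, every row is `p_c = β·𝟙 + γ·e_c`. Expanding the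
covariances, `(s/C) U_1 + Ū = a·I + W N Wᵀ`, where `W = [𝟙 | e_1]` is `C × 2` and
`a = β(s/C + 2 - Cβ)`. Since `charpoly (W (N Wᵀ)) = X^(C-2) · charpoly (N Wᵀ W)`, it remains
to see that the `2 × 2` matrix `N Wᵀ W` has eigenvalues `T - a` and `-a`, which is a check of
its trace and determinant.
-/

open Matrix Polynomial

theorem Matrix.charpoly_scalar_add_mul_of_le {R : Type*} [CommRing R] {m n : Type*}
    [Fintype m] [Fintype n] [DecidableEq m] [DecidableEq n]
    (a : R) (A : Matrix n m R) (B : Matrix m n R) (h : Fintype.card m ≤ Fintype.card n) :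
    (scalar n a + A * B).charpoly =
      (X - C a) ^ (Fintype.card n - Fintype.card m) * (B * A).charpoly.comp (X - C a) := by
  rw [add_comm, ← sub_neg_eq_add, ← map_neg, charpoly_sub_scalar, charpoly_mul_comm_of_le _ _ h,
    mul_comp, X_pow_comp, map_neg, ← sub_eq_add_neg]

section

variable {R : Type*} [CommRing R] {n : Type*} [DecidableEq n]

def categoricalCov [Fintype n] (q : n → R) : Matrix n n R := diagonal q - vecMulVec q q

def frame (R : Type*) [CommRing R] (z : n) : Matrix n (Fin 2) R :=
  of fun i => ![1, if i = z then 1 else 0]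

theorem frame_mul_mul_transpose_apply (z : n) (a b c d : R) (i j : n) :
    (frame R z * (!![a, b; c, d] * (frame R z)ᵀ)) i j =
      a + b * (if j = z then 1 else 0) + c * (if i = z then 1 else 0) +
        d * ((if i = z then 1 else 0) * (if j = z then 1 else 0)) := by
  by_cases hi : i = z <;> by_cases hj : j = z <;>
    simp [frame, mul_apply, vecMul, dotProduct, Fin.sum_univ_two, hi, hj]
  ring

variable [Fintype n]

theorem transpose_frame_mul_frame (z : n) :
    (frame R z)ᵀ * frame R z = !![(Fintype.card n : R), 1; 1, 1] := by
  ext k l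
  rw [mul_apply]
  fin_cases k <;> fin_cases l <;> simp [frame, Finset.card_univ]

theorem sum_categoricalCov_apply (β γ : R) (p : n → n → R)
    (hp : ∀ c i, p c i = if i = c then β + γ else β) (i j : n) :
    ∑ c, categoricalCov (p c) i j =
      (if i = j then Fintype.card n * β + γ - γ ^ 2 else 0) -
        (Fintype.card n * β ^ 2 + 2 * β * γ) := by
  have hp' : ∀ c i, p c i = β + γ * if i = c then 1 else 0 := by
    intro c i
    rw [hp]
    split_ifs <;> ring
  simp only [categoricalCov, Matrix.sub_apply, diagonal_apply, vecMulVec_apply, hp',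
    Finset.sum_sub_distrib]
  rcases eq_or_ne i j with rfl | hij
  · simp [Finset.sum_add_distrib, mul_add, add_mul, Finset.card_univ]
    ring
  · simp [hij, Finset.sum_add_distrib, mul_add, add_mul, Finset.card_univ]
    ring

end

section

variable {K : Type*} [Field K] {n : Type*} [Fintype n] [DecidableEq n]

theorem smul_categoricalCov_add_mean_eq (β γ t : K) (p : n → n → K)
    (hp : ∀ c i, p c i = if i = c then β + γ else β) (z : n) :
    t • categoricalCov (p z) + (Fintype.card n : K)⁻¹ • ∑ c, categoricalCov (p c) =
      scalar n (t * β + (Fintype.card n * β + γ - γ ^ 2) / Fintype.card n) +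
        frame K z * (!![-(t * β ^ 2) - (Fintype.card n * β ^ 2 + 2 * β * γ) / Fintype.card n,
          -(t * β * γ); -(t * β * γ), t * (γ - γ ^ 2)] * (frame K z)ᵀ) := by
  ext i j
  rw [Matrix.add_apply, Matrix.add_apply, Matrix.smul_apply, Matrix.smul_apply, Matrix.sum_apply,
    sum_categoricalCov_apply β γ p hp, frame_mul_mul_transpose_apply]
  simp only [categoricalCov, scalar_apply, diagonal_apply, Matrix.sub_apply, vecMulVec_apply, hp,
    smul_eq_mul]
  rcases eq_or_ne i j with rfl | hij
  · by_cases hi : i = z <;> simp [hi] <;> ring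
  · by_cases hi : i = z <;> by_cases hj : j = z
    · exact absurd (hi.trans hj.symm) hij
    · subst hi; simp [hij, hj]; ring
    · subst hj; simp [hi]; ring
    · simp [hi, hj, hij]; ring

theorem charpoly_smul_categoricalCov_add_mean (hcard : 2 ≤ Fintype.card n)
    (hn : (Fintype.card n : K) ≠ 0) (β q t : K) (hsum : q + (Fintype.card n - 1) * β = 1)
    (p : n → n → K) (hp : ∀ c i, p c i = if i = c then q else β) (z : n) :
    (t • categoricalCov (p z) + (Fintype.card n : K)⁻¹ • ∑ c, categoricalCov (p c)).charpoly =
      (X - C (β * (Fintype.card n * t * q + 2 - Fintype.card n * β))) *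
        (X - C (β * (t + 2 - Fintype.card n * β))) ^ (Fintype.card n - 2) * X := by
  set m : K := (Fintype.card n : K)
  obtain rfl : q = β + (1 - m * β) := by linear_combination hsum
  rw [smul_categoricalCov_add_mean_eq β (1 - m * β) t p hp z,
    charpoly_scalar_add_mul_of_le _ _ _ (by simpa using hcard), Fintype.card_fin,
    Matrix.mul_assoc, transpose_frame_mul_frame, charpoly_fin_two]
  set a := β * (t + 2 - m * β)
  set T := β * (m * t * (β + (1 - m * β)) + 2 - m * β)
  have ha : t * β + (m * β + (1 - m * β) - (1 - m * β) ^ 2) / m = a := by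
    field_simp
    ring
  set N : Matrix (Fin 2) (Fin 2) K := !![-(t * β ^ 2) - (m * β ^ 2 + 2 * β * (1 - m * β)) / m,
    -(t * β * (1 - m * β)); -(t * β * (1 - m * β)), t * ((1 - m * β) - (1 - m * β) ^ 2)]
  have htrace : (N * !![m, 1; 1, 1]).trace = T - 2 * a := by
    simp only [N, trace_fin_two, mul_apply, Fin.sum_univ_two]
    simp
    field_simp
    ring
  have hdet : (N * !![m, 1; 1, 1]).det = a * (a - T) := by
    rw [det_mul, det_fin_two_of, det_fin_two_of]
    field_simp
    ring
  rw [ha, htrace, hdet]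
  simp only [sub_comp, add_comp, mul_comp, X_pow_comp, X_comp, C_comp, map_sub, map_mul,
    map_ofNat, ofNat_comp]
  ring

end

/-- The matrix `(s/C) U_1 + Ū` has eigenvalues
`T = (α/(C−1))(s(1−α) + (2 − αC/(C−1)))` with multiplicity 1,
`(α/(C−1))(s/C + (2 − αC/(C−1)))` with multiplicity `C−2`, and `0` with multiplicity 1. -/
theorem stmt14 (C : ℕ) (hC : 2 ≤ C) (α s : ℝ)
    (p : Fin C → Fin C → ℝ)
    (hp : ∀ c c', p c c' = if c' = c then 1 - α else α / (C - 1))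
    (U : Fin C → Matrix (Fin C) (Fin C) ℝ)
    (hU : ∀ c, U c = Matrix.diagonal (p c) - vecMulVec (p c) (p c))
    (Ubar : Matrix (Fin C) (Fin C) ℝ)
    (hUbar : Ubar = (C : ℝ)⁻¹ • ∑ c, U c) :
    ((s / C) • U ⟨0, by omega⟩ + Ubar).charpoly =
      (X - Polynomial.C (α / (C - 1) * (s * (1 - α) + (2 - α * C / (C - 1))))) *
        (X - Polynomial.C (α / (C - 1) * (s / C + (2 - α * C / (C - 1))))) ^ (C - 2) *
        X := by
  have hC0 : (C : ℝ) ≠ 0 := by positivity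
  have hC1 : (C : ℝ) - 1 ≠ 0 := by
    have : (2 : ℝ) ≤ C := by exact_mod_cast hC
    linarith
  have hsum : (1 - α) + ((Fintype.card (Fin C) : ℝ) - 1) * (α / (C - 1)) = 1 := by
    rw [Fintype.card_fin]
    field_simp
    ring
  obtain rfl : U = fun c => categoricalCov (p c) := funext hU
  have key := charpoly_smul_categoricalCov_add_mean (by simpa using hC) (by simpa using hC0)
    (α / (C - 1)) (1 - α) (s / C) hsum p hp ⟨0, by omega⟩
  rw [Fintype.card_fin] at key
  have hT : α / (C - 1) * (C * (s / C) * (1 - α) + 2 - C * (α / (C - 1))) =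
      α / (C - 1) * (s * (1 - α) + (2 - α * C / (C - 1))) := by
    rw [mul_div_cancel₀ s hC0]
    ring
  have ha : α / (C - 1) * (s / C + 2 - C * (α / (C - 1))) =
      α / (C - 1) * (s / C + (2 - α * C / (C - 1))) := by
    ring
  rw [hUbar, key, hT, ha]
end
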